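/- arXiv:2312.02955 — 10 statements merged into one kernel-verified Lean document; each statement's English description precedes it below -/
import Mathlib

section
/- Let u, v, w, x be (not necessarily distinct) points of ℝ². There exists no pair (m, c) with m > 0 such that x lies strictly below the line L_{m,c} while u, v, w each lie on or above L_{m,c}, if and only if there is a point a = (a₁, a₂) in the convex hull of {u, v, w} such that x₁ ≤ a₁ and x₂ ≥ a₂. -/
/-- Cross lemma: if p is left of x, q is right of x, and no point of the segment
[p,q] is weakly right of and weakly below x, then the slope ratios compare. -/
lemma cross_ratio_lt (p q x : ℝ × ℝ) (hp : p.1 < x.1) (hq : x.1 < q.1)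
    (hseg : ∀ a ∈ segment ℝ p q, x.1 ≤ a.1 → a.2 ≤ x.2 → False) :
    (x.2 - p.2) / (x.1 - p.1) < (q.2 - x.2) / (q.1 - x.1) := by
  by_contra h'
  push_neg at h'
  have hd1 : (0:ℝ) < q.1 - x.1 := by linarith
  have hd2 : (0:ℝ) < x.1 - p.1 := by linarith
  have hcross : (q.2 - x.2) * (x.1 - p.1) ≤ (x.2 - p.2) * (q.1 - x.1) :=
    (div_le_div_iff₀ hd1 hd2).mp h'
  have hd : (0:ℝ) < q.1 - p.1 := by linarith
  set t : ℝ := (q.1 - x.1) / (q.1 - p.1) with ht_def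
  have ht0 : 0 ≤ t := le_of_lt (div_pos hd1 hd)
  have ht1 : t ≤ 1 := by
    rw [div_le_one hd]; linarith
  have ht : t * (q.1 - p.1) = q.1 - x.1 := div_mul_cancel₀ _ (ne_of_gt hd)
  set a : ℝ × ℝ := (t * p.1 + (1 - t) * q.1, t * p.2 + (1 - t) * q.2) with ha_def
  have hmem : a ∈ segment ℝ p q := by
    refine ⟨t, 1 - t, ht0, by linarith, by ring, ?_⟩
    apply Prod.ext <;> simp [ha_def, Prod.smul_def, smul_eq_mul]
  have ha1 : a.1 = x.1 := by
    show t * p.1 + (1 - t) * q.1 = x.1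
    nlinarith [ht]
  have ha2 : a.2 ≤ x.2 := by
    show t * p.2 + (1 - t) * q.2 ≤ x.2
    have expand : (t * p.2 + (1 - t) * q.2 - x.2) * (q.1 - p.1) =
        (q.1 - x.1) * (p.2 - x.2) + (x.1 - p.1) * (q.2 - x.2) := by
      linear_combination (p.2 - q.2) * ht
    have hnum : (q.1 - x.1) * (p.2 - x.2) + (x.1 - p.1) * (q.2 - x.2) ≤ 0 := by nlinarith
    nlinarith [expand, hnum, hd]
  exact hseg a hmem (le_of_eq ha1.symm) ha2

/-- Per-vertex bound given the slope m lies in the right interval. -/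
lemma vertex_bound (x p : ℝ × ℝ) (m : ℝ)
    (hp : p.1 < x.1 ∨ x.2 < p.2)
    (h1 : p.1 < x.1 → (x.2 - p.2) / (x.1 - p.1) < m)
    (h2 : x.1 < p.1 → m < (p.2 - x.2) / (p.1 - x.1)) :
    x.2 - p.2 < m * (x.1 - p.1) := by
  rcases lt_trichotomy p.1 x.1 with h | h | h
  · have := h1 h
    have hd : (0:ℝ) < x.1 - p.1 := by linarith
    have := (div_lt_iff₀ hd).mp this
    linarith
  · have hx2 : x.2 < p.2 := by
      rcases hp with h' | h'
      · linarith
      · exact h'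
    have hz : x.1 - p.1 = 0 := by rw [h]; ring
    rw [hz, mul_zero]
    linarith
  · have := h2 h
    have hd : (0:ℝ) < p.1 - x.1 := by linarith
    have := (lt_div_iff₀ hd).mp this
    nlinarith

theorem no_separating_line_below_iff (u v w x : ℝ × ℝ) :
    (¬ ∃ m c : ℝ, m > 0 ∧
        x.2 < m * x.1 + c ∧
        u.2 ≥ m * u.1 + c ∧ v.2 ≥ m * v.1 + c ∧ w.2 ≥ m * w.1 + c) ↔
    ∃ a ∈ convexHull ℝ ({u, v, w} : Set (ℝ × ℝ)), x.1 ≤ a.1 ∧ x.2 ≥ a.2 := by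
  constructor
  · intro h
    by_contra hc
    push_neg at hc
    apply h
    -- hc : ∀ a ∈ hull, x.1 ≤ a.1 → ¬ x.2 ≥ a.2, i.e. a.2 > x.2
    have hc' : ∀ a ∈ convexHull ℝ ({u, v, w} : Set (ℝ × ℝ)),
        x.1 ≤ a.1 → a.2 ≤ x.2 → False := by
      intro a ha h1 h2
      exact absurd h2 (not_le.mpr (hc a ha h1))
    have hU : u ∈ convexHull ℝ ({u, v, w} : Set (ℝ × ℝ)) :=
      subset_convexHull ℝ _ (by simp)
    have hV : v ∈ convexHull ℝ ({u, v, w} : Set (ℝ × ℝ)) :=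
      subset_convexHull ℝ _ (by simp)
    have hW : w ∈ convexHull ℝ ({u, v, w} : Set (ℝ × ℝ)) :=
      subset_convexHull ℝ _ (by simp)
    -- each vertex is strictly left of x or strictly above x
    have hvert : ∀ p ∈ ({u, v, w} : Set (ℝ × ℝ)), p.1 < x.1 ∨ x.2 < p.2 := by
      intro p hp
      by_contra hcon
      push_neg at hcon
      exact hc' p (subset_convexHull ℝ _ hp) hcon.1 hcon.2
    -- segments between vertices lie in hull
    have hsegOK : ∀ p ∈ ({u, v, w} : Set (ℝ × ℝ)), ∀ q ∈ ({u, v, w} : Set (ℝ × ℝ)),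
        ∀ a ∈ segment ℝ p q, x.1 ≤ a.1 → a.2 ≤ x.2 → False := by
      intro p hp q hq a ha
      exact hc' a ((convex_convexHull ℝ _).segment_subset
        (subset_convexHull ℝ _ hp) (subset_convexHull ℝ _ hq) ha)
    -- lower and upper candidate slopes
    set lo : ℝ × ℝ → ℝ := fun p => if p.1 < x.1 then (x.2 - p.2) / (x.1 - p.1) else 0
      with lo_def
    set L : ℝ := max 0 (max (lo u) (max (lo v) (lo w))) with L_def
    set hi : ℝ × ℝ → ℝ := fun p => if x.1 < p.1 then (p.2 - x.2) / (p.1 - x.1) else L + 2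
      with hi_def
    set H : ℝ := min (hi u) (min (hi v) (hi w)) with H_def
    have hL0 : 0 ≤ L := le_max_left _ _
    have hlo_le : ∀ p ∈ ({u, v, w} : Set (ℝ × ℝ)), lo p ≤ L := by
      intro p hp
      simp only [Set.mem_insert_iff, Set.mem_singleton_iff] at hp
      rcases hp with rfl | rfl | rfl
      · exact le_max_of_le_right (le_max_left _ _)
      · exact le_max_of_le_right (le_max_of_le_right (le_max_left _ _))
      · exact le_max_of_le_right (le_max_of_le_right (le_max_right _ _))
    have hH_le : ∀ p ∈ ({u, v, w} : Set (ℝ × ℝ)), H ≤ hi p := by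
      intro p hp
      simp only [Set.mem_insert_iff, Set.mem_singleton_iff] at hp
      rcases hp with rfl | rfl | rfl
      · exact min_le_left _ _
      · exact le_trans (min_le_right _ _) (min_le_left _ _)
      · exact le_trans (min_le_right _ _) (min_le_right _ _)
    -- L < hi p for every vertex p
    have hLhi : ∀ p ∈ ({u, v, w} : Set (ℝ × ℝ)), L < hi p := by
      intro p hp
      by_cases hxp : x.1 < p.1
      · have hpi : hi p = (p.2 - x.2) / (p.1 - x.1) := by simp [hi_def, hxp]
        rw [hpi]
        have hx2p : x.2 < p.2 := by
          rcases hvert p hp with h' | h'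
          · exact absurd h' (by linarith)
          · exact h'
        have hspos : 0 < (p.2 - x.2) / (p.1 - x.1) :=
          div_pos (by linarith) (by linarith)
        -- L = max of 0 and the lo's; show each < s p
        have hkey : ∀ q ∈ ({u, v, w} : Set (ℝ × ℝ)), lo q < (p.2 - x.2) / (p.1 - x.1) := by
          intro q hq
          by_cases hq1 : q.1 < x.1
          · have : lo q = (x.2 - q.2) / (x.1 - q.1) := by simp [lo_def, hq1]
            rw [this]
            exact cross_ratio_lt q p x hq1 hxp (hsegOK q hq p hp)
          · have : lo q = 0 := by simp [lo_def, hq1]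
            rw [this]; exact hspos
        simp only [L_def]
        rw [max_lt_iff, max_lt_iff, max_lt_iff]
        exact ⟨hspos, hkey u (by simp), hkey v (by simp), hkey w (by simp)⟩
      · have : hi p = L + 2 := by simp [hi_def, hxp]
        rw [this]; linarith
    have hLH : L < H := by
      simp only [H_def, lt_min_iff]
      exact ⟨hLhi u (by simp), hLhi v (by simp), hLhi w (by simp)⟩
    set m : ℝ := (L + H) / 2 with m_def
    have hmL : L < m := by simp only [m_def]; linarith
    have hmH : m < H := by simp only [m_def]; linarith
    have hm : 0 < m := lt_of_le_of_lt hL0 hmL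
    have hbound : ∀ p ∈ ({u, v, w} : Set (ℝ × ℝ)), x.2 - p.2 < m * (x.1 - p.1) := by
      intro p hp
      refine vertex_bound x p m (hvert p hp) ?_ ?_
      · intro h1
        have : lo p = (x.2 - p.2) / (x.1 - p.1) := by simp [lo_def, h1]
        calc (x.2 - p.2) / (x.1 - p.1) = lo p := this.symm
          _ ≤ L := hlo_le p hp
          _ < m := hmL
      · intro h2
        have : hi p = (p.2 - x.2) / (p.1 - x.1) := by simp [hi_def, h2]
        calc m < H := hmH
          _ ≤ hi p := hH_le p hp
          _ = (p.2 - x.2) / (p.1 - x.1) := this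
    set c : ℝ := min (u.2 - m * u.1) (min (v.2 - m * v.1) (w.2 - m * w.1)) with c_def
    refine ⟨m, c, hm, ?_, ?_, ?_, ?_⟩
    · have hu' := hbound u (by simp)
      have hv' := hbound v (by simp)
      have hw' := hbound w (by simp)
      have : x.2 - m * x.1 < c := by
        simp only [c_def, lt_min_iff]
        refine ⟨by nlinarith, by nlinarith, by nlinarith⟩
      linarith
    · have : c ≤ u.2 - m * u.1 := min_le_left _ _
      linarith
    · have : c ≤ v.2 - m * v.1 := le_trans (min_le_right _ _) (min_le_left _ _)
      linarith
    · have : c ≤ w.2 - m * w.1 := le_trans (min_le_right _ _) (min_le_right _ _)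
      linarith
  · rintro ⟨a, ha, hax1, hax2⟩ ⟨m, c, hm, hx, hu, hv, hw⟩
    have hconv : Convex ℝ {p : ℝ × ℝ | m * p.1 + c ≤ p.2} := by
      intro y hy z hz s t hs ht hst
      simp only [Set.mem_setOf_eq] at *
      have h1 : (s • y + t • z).1 = s * y.1 + t * z.1 := rfl
      have h2 : (s • y + t • z).2 = s * y.2 + t * z.2 := rfl
      rw [h1, h2]
      have hc2 : s * c + t * c = c := by rw [← add_mul, hst, one_mul]
      nlinarith [mul_le_mul_of_nonneg_left hy hs, mul_le_mul_of_nonneg_left hz ht, hc2]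
    have hsub : convexHull ℝ ({u, v, w} : Set (ℝ × ℝ)) ⊆ {p : ℝ × ℝ | m * p.1 + c ≤ p.2} := by
      apply convexHull_min _ hconv
      intro p hp
      simp only [Set.mem_insert_iff, Set.mem_singleton_iff] at hp
      rcases hp with rfl | rfl | rfl <;> simpa using (by assumption : p.2 ≥ m * p.1 + c)
    have ha' : m * a.1 + c ≤ a.2 := hsub ha
    have : m * x.1 ≤ m * a.1 := mul_le_mul_of_nonneg_left hax1 (le_of_lt hm)
    linarith
end

section
/- Let u, v, w, x be (not necessarily distinct) points of ℝ². There exists no pair (m, c) with m > 0 such that x lies strictly above the line L_{m,c} while u, v, w each lie on or below L_{m,c}, if and only if there is a point a = (a₁, a₂) in the convex hull of {u, v, w} such that x₁ ≥ a₁ and x₂ ≤ a₂. -/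
/-!
If no point of `K = convexHull {u, v, w}` lies weakly to the upper left of `x`, then `K` is
disjoint from the closed quadrant `Q = (-∞, x₁] × [x₂, ∞)`, and Hahn–Banach gives a functional
`α p₁ + β p₂` strictly separating `K` from `Q`. It is bounded below on `Q`, so `α ≤ 0 ≤ β`.
Tilting it to `(α - ε, β + ε)` for small `ε > 0` keeps the strict inequalities at the finitely
many points `u, v, w, x` and makes both coefficients strict, so its level line has positive slope.
Conversely, a line of positive slope with `u, v, w` below it has all of `K` below it, and the
region below such a line is closed under moving right and down.
-/

open Filter Topology

lemma LinearMap.apply_prod_eq {R : Type*} [CommSemiring R] (f : R × R →ₗ[R] R) (p : R × R) :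
    f p = f (1, 0) * p.1 + f (0, 1) * p.2 := by
  conv_lhs => rw [show p = p.1 • ((1 : R), (0 : R)) + p.2 • ((0 : R), (1 : R)) by ext <;> simp]
  simp only [map_add, map_smul, smul_eq_mul, mul_comm]

section OrderedField

variable {𝕜 : Type*} [Field 𝕜] [LinearOrder 𝕜] [IsStrictOrderedRing 𝕜]

lemma nonneg_of_forall_lt_add_mul {A t β : 𝕜} (h : ∀ r : 𝕜, 0 ≤ r → t < A + r * β) : 0 ≤ β := by
  by_contra! hβ
  have key := h (|A - t| / -β) (div_nonneg (abs_nonneg _) (by linarith))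
  rw [div_mul_eq_mul_div, div_neg, mul_div_cancel_right₀ _ hβ.ne] at key
  linarith [le_abs_self (A - t)]

lemma lt_line_iff {α β s : 𝕜} (hβ : 0 < β) (p : 𝕜 × 𝕜) :
    α * p.1 + β * p.2 < s ↔ p.2 < -α / β * p.1 + s / β := by
  rw [show -α / β * p.1 + s / β = (s - α * p.1) / β by ring, lt_div_iff₀ hβ]
  constructor <;> intro h <;> linarith

lemma line_lt_iff {α β s : 𝕜} (hβ : 0 < β) (p : 𝕜 × 𝕜) :
    s < α * p.1 + β * p.2 ↔ -α / β * p.1 + s / β < p.2 := by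
  rw [show -α / β * p.1 + s / β = (s - α * p.1) / β by ring, div_lt_iff₀ hβ]
  constructor <;> intro h <;> linarith

lemma convex_setOf_le_line (m c : 𝕜) : Convex 𝕜 {p : 𝕜 × 𝕜 | p.2 ≤ m * p.1 + c} := by
  simpa only [LinearMap.sub_apply, LinearMap.smul_apply, LinearMap.snd_apply,
    LinearMap.fst_apply, smul_eq_mul, sub_le_iff_le_add'] using
    convex_halfSpace_le (LinearMap.snd 𝕜 𝕜 𝕜 - m • LinearMap.fst 𝕜 𝕜 𝕜).isLinear c

end OrderedField

lemma exists_separating_functional_of_disjoint_quadrant {K : Set (ℝ × ℝ)} (hKc : Convex ℝ K)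
    (hKk : IsCompact K) {x : ℝ × ℝ} (hK : Disjoint K (Set.Iic x.1 ×ˢ Set.Ici x.2)) :
    ∃ α β s : ℝ, α ≤ 0 ∧ 0 ≤ β ∧ (∀ a ∈ K, α * a.1 + β * a.2 < s) ∧
      s < α * x.1 + β * x.2 := by
  obtain ⟨f, s, t, hKs, hst, hQt⟩ := geometric_hahn_banach_compact_closed hKc hKk
    ((convex_Iic _).prod (convex_Ici _)) (isClosed_Iic.prod isClosed_Ici) hK
  have hf (p : ℝ × ℝ) : f p = f (1, 0) * p.1 + f (0, 1) * p.2 := f.toLinearMap.apply_prod_eq p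
  set α := f (1, 0)
  set β := f (0, 1)
  simp only [hf] at hKs hQt
  refine ⟨α, β, s, ?_, ?_, hKs, hst.trans (hQt x (by simp))⟩
  · refine neg_nonneg.1 (nonneg_of_forall_lt_add_mul (A := α * x.1 + β * x.2) (t := t)
      fun r hr => ?_)
    have := hQt (x.1 - r, x.2) (by simpa using hr)
    linarith
  · refine nonneg_of_forall_lt_add_mul (A := α * x.1 + β * x.2) (t := t) fun r hr => ?_
    have := hQt (x.1, x.2 + r) (by simpa using hr)
    linarith

lemma exists_pos_tilt_of_strictly_separates {S : Set (ℝ × ℝ)} (hS : S.Finite) {α β s : ℝ}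
    {x : ℝ × ℝ} (hSs : ∀ p ∈ S, α * p.1 + β * p.2 < s) (hxs : s < α * x.1 + β * x.2) :
    ∃ ε > 0, (∀ p ∈ S, (α - ε) * p.1 + (β + ε) * p.2 < s) ∧
      s < (α - ε) * x.1 + (β + ε) * x.2 := by
  have hcont (p : ℝ × ℝ) : Continuous fun ε : ℝ => (α - ε) * p.1 + (β + ε) * p.2 := by fun_prop
  have hS' : ∀ᶠ ε in 𝓝 0, ∀ p ∈ S, (α - ε) * p.1 + (β + ε) * p.2 < s :=
    (eventually_all_finite hS).2 fun p hp =>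
      (hcont p).continuousAt.eventually_lt continuousAt_const (by simpa using hSs p hp)
  have hx' : ∀ᶠ ε in 𝓝 0, s < (α - ε) * x.1 + (β + ε) * x.2 :=
    continuousAt_const.eventually_lt (hcont x).continuousAt (by simpa using hxs)
  exact (hS'.and hx').exists_gt

lemma exists_pos_slope_line_of_strictly_separates {S : Set (ℝ × ℝ)} (hS : S.Finite)
    {α β s : ℝ} {x : ℝ × ℝ} (hα : α ≤ 0) (hβ : 0 ≤ β)
    (hSs : ∀ p ∈ S, α * p.1 + β * p.2 < s) (hxs : s < α * x.1 + β * x.2) :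
    ∃ m c : ℝ, 0 < m ∧ m * x.1 + c < x.2 ∧ ∀ p ∈ S, p.2 < m * p.1 + c := by
  obtain ⟨ε, hε, hSε, hxε⟩ := exists_pos_tilt_of_strictly_separates hS hSs hxs
  have hβε : 0 < β + ε := by linarith
  exact ⟨-(α - ε) / (β + ε), s / (β + ε), div_pos (by linarith) hβε,
    (line_lt_iff hβε x).1 hxε, fun p hp => (lt_line_iff hβε p).1 (hSε p hp)⟩

theorem no_separating_line_above_iff (u v w x : ℝ × ℝ) :
    (¬ ∃ m c : ℝ, m > 0 ∧
        x.2 > m * x.1 + c ∧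
        u.2 ≤ m * u.1 + c ∧ v.2 ≤ m * v.1 + c ∧ w.2 ≤ m * w.1 + c) ↔
    ∃ a ∈ convexHull ℝ ({u, v, w} : Set (ℝ × ℝ)), x.1 ≥ a.1 ∧ x.2 ≤ a.2 := by
  constructor
  · intro hno
    by_contra hfar
    have hfin : ({u, v, w} : Set (ℝ × ℝ)).Finite := Set.toFinite _
    obtain ⟨α, β, s, hα, hβ, hKs, hxs⟩ := exists_separating_functional_of_disjoint_quadrant
      (convex_convexHull ℝ _) (hfin.isCompact_convexHull ℝ)
      (Set.disjoint_left.2 fun a ha haQ => hfar ⟨a, ha, haQ⟩)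
    obtain ⟨m, c, hm, hx, hS⟩ := exists_pos_slope_line_of_strictly_separates hfin hα hβ
      (fun p hp => hKs p (subset_convexHull ℝ _ hp)) hxs
    exact hno ⟨m, c, hm, hx, (hS u (by simp)).le, (hS v (by simp)).le, (hS w (by simp)).le⟩
  · rintro ⟨a, ha, hax1, hax2⟩ ⟨m, c, hm, hx, hu, hv, hw⟩
    have hsub : {u, v, w} ⊆ {p : ℝ × ℝ | p.2 ≤ m * p.1 + c} := by
      simp only [Set.insert_subset_iff, Set.singleton_subset_iff, Set.mem_ofPred_eq]
      exact ⟨hu, hv, hw⟩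
    have ha' : a.2 ≤ m * a.1 + c := convexHull_min hsub (convex_setOf_le_line m c) ha
    linarith [mul_le_mul_of_nonneg_left hax1 hm.le]
end

section
/- Let u, v, w, x be (not necessarily distinct) points of ℝ². There exists no pair (m, c) with m > 0 such that x lies on the line L_{m,c} while u, v, w each lie on or above L_{m,c}, if and only if there is a point a = (a₁, a₂) in the convex hull of {u, v, w} such that x₁ ≤ a₁, x₂ ≥ a₂, and a ≠ x. -/
/-!
A line of slope `m > 0` through `x` lies below a point `p` iff `m ≤ slopeFrom x p` when `p` lies
to the right of `x`, `slopeFrom x p ≤ m` when `p` lies to the left, and `x.2 ≤ p.2` when `p`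
lies on the vertical through `x`. If the convex hull meets the closed quadrant to the lower right of
`x` only in `x`, then all slopes to the right are positive, and every slope to the left is at most
every slope to the right: otherwise the segment joining the two points would cross the vertical
through `x` strictly below `x`. Finitely many such bounds leave room for a positive `m`.
Conversely, the closed half-plane above such a line is convex, so it contains the hull, and it
meets that quadrant only in `x`.
-/

theorem exists_pos_between_of_finite {L U : Set ℝ} (hL : L.Finite) (hU : U.Finite)
    (hU_pos : ∀ u ∈ U, 0 < u) (hLU : ∀ l ∈ L, ∀ u ∈ U, l ≤ u) :
    ∃ m, 0 < m ∧ (∀ l ∈ L, l ≤ m) ∧ ∀ u ∈ U, m ≤ u := by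
  rcases U.eq_empty_or_nonempty with rfl | hne
  · obtain ⟨M, hM⟩ := hL.bddAbove
    exact ⟨max 1 M, by positivity, fun l hl => (hM hl).trans (le_max_right _ _), by simp⟩
  · obtain ⟨m, hm, hmin⟩ := U.exists_min_image id hU hne
    exact ⟨m, hU_pos m hm, fun l hl => hLU l hl m hm, hmin⟩

theorem convex_setOf_add_mul_fst_le_snd (m c : ℝ) :
    Convex ℝ {p : ℝ × ℝ | m * p.1 + c ≤ p.2} := by
  intro p hp q hq a b ha hb hab
  simp only [Set.mem_ofPred_eq, Prod.fst_add, Prod.snd_add, Prod.smul_fst, Prod.smul_snd,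
    smul_eq_mul] at *
  have hc : c = a * c + b * c := by rw [← add_mul, hab, one_mul]
  nlinarith [mul_le_mul_of_nonneg_left hp ha, mul_le_mul_of_nonneg_left hq hb]

theorem eq_of_mem_convexHull_of_line_below {S : Set (ℝ × ℝ)} {x a : ℝ × ℝ} {m c : ℝ}
    (hm : 0 < m) (hx : x.2 = m * x.1 + c) (hS : ∀ p ∈ S, m * p.1 + c ≤ p.2)
    (ha : a ∈ convexHull ℝ S) (h₁ : x.1 ≤ a.1) (h₂ : a.2 ≤ x.2) : a = x := by
  have ha_above : m * a.1 + c ≤ a.2 :=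
    convexHull_min hS (convex_setOf_add_mul_fst_le_snd m c) ha
  have : m * x.1 ≤ m * a.1 := mul_le_mul_of_nonneg_left h₁ hm.le
  exact Prod.ext (by nlinarith) (by nlinarith)

noncomputable def slopeFrom (x p : ℝ × ℝ) : ℝ := (p.2 - x.2) / (p.1 - x.1)

section LowerRightQuadrant

variable {K : Set (ℝ × ℝ)} {x : ℝ × ℝ}

theorem snd_lt_of_fst_lt (hx : ∀ a ∈ K, x.1 ≤ a.1 → a.2 ≤ x.2 → a = x) {a : ℝ × ℝ}
    (ha : a ∈ K) (h : x.1 < a.1) : x.2 < a.2 := by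
  by_contra! h'
  exact h.ne' (congrArg Prod.fst (hx a ha h.le h'))

theorem snd_le_of_fst_eq (hx : ∀ a ∈ K, x.1 ≤ a.1 → a.2 ≤ x.2 → a = x) {a : ℝ × ℝ}
    (ha : a ∈ K) (h : a.1 = x.1) : x.2 ≤ a.2 := by
  by_contra! h'
  exact h'.ne (congrArg Prod.snd (hx a ha h.ge h'.le))

theorem slopeFrom_le_of_fst_lt_lt (hK : Convex ℝ K)
    (hx : ∀ a ∈ K, x.1 ≤ a.1 → a.2 ≤ x.2 → a = x) {p q : ℝ × ℝ} (hp : p ∈ K) (hq : q ∈ K)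
    (hpx : p.1 < x.1) (hxq : x.1 < q.1) : slopeFrom x p ≤ slopeFrom x q := by
  have hd : 0 < q.1 - p.1 := by linarith
  set a := ((q.1 - x.1) / (q.1 - p.1)) • p + ((x.1 - p.1) / (q.1 - p.1)) • q
  have ha : a ∈ K := hK hp hq (div_nonneg (by linarith) hd.le) (div_nonneg (by linarith) hd.le)
    (by field_simp; ring)
  have ha₁ : a.1 = x.1 := by
    simp only [a, Prod.fst_add, Prod.smul_fst, smul_eq_mul]
    field_simp
    ring
  have ha₂ : (q.1 - p.1) * (a.2 - x.2) =
      (q.1 - x.1) * (p.2 - x.2) + (x.1 - p.1) * (q.2 - x.2) := by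
    simp only [a, Prod.snd_add, Prod.smul_snd, smul_eq_mul]
    field_simp
    ring
  have hcross := ha₂ ▸ mul_nonneg hd.le (sub_nonneg.2 (snd_le_of_fst_eq hx ha ha₁))
  rw [slopeFrom, slopeFrom, div_le_iff_of_neg (sub_neg.2 hpx), div_mul_eq_mul_div,
    div_le_iff₀ (sub_pos.2 hxq)]
  linarith

theorem exists_pos_slope_le_of_finite (hK : Convex ℝ K)
    (hx : ∀ a ∈ K, x.1 ≤ a.1 → a.2 ≤ x.2 → a = x) {S : Set (ℝ × ℝ)} (hS : S.Finite)
    (hSK : S ⊆ K) : ∃ m, 0 < m ∧ ∀ p ∈ S, m * (p.1 - x.1) ≤ p.2 - x.2 := by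
  obtain ⟨m, hm, hL, hU⟩ := exists_pos_between_of_finite
    ((hS.subset (Set.sep_subset S fun p => p.1 < x.1)).image (slopeFrom x))
    ((hS.subset (Set.sep_subset S fun p => x.1 < p.1)).image (slopeFrom x))
    (by
      rintro _ ⟨p, ⟨hp, hxp⟩, rfl⟩
      exact div_pos (sub_pos.2 (snd_lt_of_fst_lt hx (hSK hp) hxp)) (sub_pos.2 hxp))
    (by
      rintro _ ⟨p, ⟨hp, hpx⟩, rfl⟩ _ ⟨q, ⟨hq, hxq⟩, rfl⟩
      exact slopeFrom_le_of_fst_lt_lt hK hx (hSK hp) (hSK hq) hpx hxq)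
  refine ⟨m, hm, fun p hp => ?_⟩
  rcases lt_trichotomy p.1 x.1 with h | h | h
  · have := hL _ ⟨p, ⟨hp, h⟩, rfl⟩
    rwa [slopeFrom, div_le_iff_of_neg (sub_neg.2 h)] at this
  · rw [h, sub_self, mul_zero, sub_nonneg]
    exact snd_le_of_fst_eq hx (hSK hp) h
  · have := hU _ ⟨p, ⟨hp, h⟩, rfl⟩
    rwa [slopeFrom, le_div_iff₀ (sub_pos.2 h)] at this

end LowerRightQuadrant

theorem exists_line_through_below_iff {S : Set (ℝ × ℝ)} (hS : S.Finite) (x : ℝ × ℝ) :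
    (∃ m c : ℝ, 0 < m ∧ x.2 = m * x.1 + c ∧ ∀ p ∈ S, m * p.1 + c ≤ p.2) ↔
      ∀ a ∈ convexHull ℝ S, x.1 ≤ a.1 → a.2 ≤ x.2 → a = x := by
  refine ⟨fun ⟨m, c, hm, hx, hS⟩ a ha => eq_of_mem_convexHull_of_line_below hm hx hS ha,
    fun hx => ?_⟩
  obtain ⟨m, hm, h⟩ :=
    exists_pos_slope_le_of_finite (convex_convexHull ℝ S) hx hS (subset_convexHull ℝ S)
  exact ⟨m, x.2 - m * x.1, hm, by ring, fun p hp => by linarith [h p hp]⟩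

theorem no_line_through_x_below_uvw_iff (u v w x : ℝ × ℝ) :
    (¬ ∃ m c : ℝ, m > 0 ∧
        x.2 = m * x.1 + c ∧
        u.2 ≥ m * u.1 + c ∧ v.2 ≥ m * v.1 + c ∧ w.2 ≥ m * w.1 + c) ↔
    ∃ a ∈ convexHull ℝ ({u, v, w} : Set (ℝ × ℝ)), x.1 ≤ a.1 ∧ x.2 ≥ a.2 ∧ a ≠ x := by
  have h := (exists_line_through_below_iff (Set.toFinite {u, v, w}) x).not
  simp only [Set.mem_insert_iff, Set.mem_singleton_iff, forall_eq_or_imp, forall_eq,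
    not_forall, exists_prop] at h
  simpa only [gt_iff_lt, ge_iff_le] using h
end

section
/- Let u, v, w, x be (not necessarily distinct) points of ℝ². There exists no pair (m, c) with m > 0 such that x lies on the line L_{m,c} while u, v, w each lie on or below L_{m,c}, if and only if there is a point a = (a₁, a₂) in the convex hull of {u, v, w} such that x₁ ≥ a₁, x₂ ≤ a₂, and a ≠ x. -/
/-- Conflict lemma: if p is to the right of x and q to the left, both in a convex set K,
and the slope from x to p exceeds the slope from x to q, then K contains a point
directly above x (or on the vertical line with larger second coordinate). -/
lemma slope_conflict {K : Set (ℝ × ℝ)} (hK : Convex ℝ K) {x p q : ℝ × ℝ}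
    (hp : p ∈ K) (hq : q ∈ K) (hpx : x.1 < p.1) (hqx : q.1 < x.1)
    (h : (q.2 - x.2) / (q.1 - x.1) < (p.2 - x.2) / (p.1 - x.1)) :
    ∃ r ∈ K, r.1 = x.1 ∧ x.2 < r.2 := by
  set A : ℝ := p.1 - x.1 with hA
  set B : ℝ := x.1 - q.1 with hB
  have hA0 : 0 < A := by simp [hA]; linarith
  have hB0 : 0 < B := by simp [hB]; linarith
  have hd : 0 < p.1 - q.1 := by linarith
  have key : (x.2 - q.2) * A < (p.2 - x.2) * B := by
    have h1 : (q.2 - x.2) / (q.1 - x.1) = (x.2 - q.2) / B := by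
      rw [hB]; rw [div_eq_div_iff (by linarith) (by linarith)]; ring
    rw [h1, div_lt_div_iff₀ hB0 hA0] at h
    linarith
  set t : ℝ := B / (p.1 - q.1) with ht
  have ht0 : 0 ≤ t := le_of_lt (div_pos hB0 hd)
  have ht1 : t ≤ 1 := by
    rw [ht, div_le_one hd]; linarith
  refine ⟨(1 - t) • q + t • p, hK hq hp (by linarith) ht0 (by ring), ?_, ?_⟩
  · have : ((1 - t) • q + t • p).1 = (1 - t) * q.1 + t * p.1 := by simp
    rw [this, ht]
    field_simp
    rw [hB]; ring
  · have h2 : ((1 - t) • q + t • p).2 = (1 - t) * q.2 + t * p.2 := by simp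
    rw [h2, ht]
    rw [show (1 - B / (p.1 - q.1)) * q.2 + B / (p.1 - q.1) * p.2
        = ((p.1 - q.1 - B) * q.2 + B * p.2) / (p.1 - q.1) by field_simp]
    rw [lt_div_iff₀ hd]
    have : p.1 - q.1 - B = A := by rw [hA, hB]; ring
    have hAB : p.1 - q.1 = A + B := by rw [hA, hB]; ring
    rw [this, hAB]
    nlinarith [key]

theorem no_line_through_x_above_uvw_iff (u v w x : ℝ × ℝ) :
    (¬ ∃ m c : ℝ, m > 0 ∧
        x.2 = m * x.1 + c ∧
        u.2 ≤ m * u.1 + c ∧ v.2 ≤ m * v.1 + c ∧ w.2 ≤ m * w.1 + c) ↔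
    ∃ a ∈ convexHull ℝ ({u, v, w} : Set (ℝ × ℝ)), x.1 ≥ a.1 ∧ x.2 ≤ a.2 ∧ a ≠ x := by
  set K := convexHull ℝ ({u, v, w} : Set (ℝ × ℝ)) with hKdef
  have hKconv : Convex ℝ K := convex_convexHull ℝ _
  have huK : u ∈ K := subset_convexHull ℝ _ (by simp)
  have hvK : v ∈ K := subset_convexHull ℝ _ (by simp)
  have hwK : w ∈ K := subset_convexHull ℝ _ (by simp)
  constructor
  · intro hL
    by_contra hR
    push_neg at hR
    -- hR : ∀ a ∈ K, x.1 ≥ a.1 → x.2 ≤ a.2 → a = x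
    apply hL
    set lb : ℝ × ℝ → ℝ := fun p => if x.1 < p.1 then (p.2 - x.2) / (p.1 - x.1) else 0 with hlb
    set M : ℝ := max 1 (max (lb u) (max (lb v) (lb w))) with hM
    have hM1 : (1:ℝ) ≤ M := le_max_left _ _
    set ub : ℝ × ℝ → ℝ := fun p => if p.1 < x.1 then (p.2 - x.2) / (p.1 - x.1) else M with hub
    set m : ℝ := min (min (ub u) (ub v)) (ub w) with hm
    -- each ub is positive
    have hub_pos : ∀ p ∈ K, 0 < ub p := by
      intro p hpK
      by_cases hc : p.1 < x.1
      · have hp2 : p.2 < x.2 := by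
          by_contra hp2
          push_neg at hp2
          have := hR p hpK (le_of_lt hc) hp2
          rw [this] at hc; exact lt_irrefl _ hc
        simp only [hub, hc, if_pos]
        exact div_pos_of_neg_of_neg (by linarith) (by linarith)
      · simp only [hub, hc, if_neg, if_false]
        linarith
    have hm_pos : 0 < m := by
      have h1 := hub_pos u huK
      have h2 := hub_pos v hvK
      have h3 := hub_pos w hwK
      simp only [hm, lt_min_iff]
      exact ⟨⟨h1, h2⟩, h3⟩
    -- the key constraint: lb p ≤ ub q for all relevant p q
    have hlbub : ∀ p ∈ ({u, v, w} : Set (ℝ × ℝ)), ∀ q ∈ K, lb p ≤ ub q := by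
      intro p hp q hqK
      have hpK : p ∈ K := subset_convexHull ℝ _ hp
      by_cases hpc : x.1 < p.1
      · by_cases hqc : q.1 < x.1
        · simp only [hlb, hub, hpc, hqc, if_pos]
          by_contra hcon
          push_neg at hcon
          obtain ⟨r, hrK, hr1, hr2⟩ := slope_conflict hKconv hpK hqK hpc hqc hcon
          have := hR r hrK (le_of_eq hr1) (le_of_lt hr2)
          rw [this] at hr2; exact lt_irrefl _ hr2
        · -- ub q = M ≥ lb p
          simp only [hub, hqc, if_neg, if_false]
          have hple : lb p ≤ max (lb u) (max (lb v) (lb w)) := by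
            rcases hp with h | h | h <;> subst h
            · exact le_max_left _ _
            · exact le_trans (le_max_left _ _) (le_max_right _ _)
            · exact le_trans (le_max_right _ _) (le_max_right _ _)
          exact le_trans hple (le_max_right _ _)
      · simp only [hlb, hpc, if_neg, if_false]
        exact le_of_lt (hub_pos q hqK)
    have hconstraint : ∀ p ∈ ({u, v, w} : Set (ℝ × ℝ)), p.2 - x.2 ≤ m * (p.1 - x.1) := by
      intro p hp
      have hpK : p ∈ K := subset_convexHull ℝ _ hp
      have hmub : m ≤ ub p := by
        rcases hp with h | h | h <;> subst h
        · exact le_trans (min_le_left _ _) (min_le_left _ _)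
        · exact le_trans (min_le_left _ _) (min_le_right _ _)
        · exact min_le_right _ _
      have hlbm : lb p ≤ m := by
        simp only [hm, le_min_iff]
        exact ⟨⟨hlbub p hp u huK, hlbub p hp v hvK⟩, hlbub p hp w hwK⟩
      rcases lt_trichotomy p.1 x.1 with hc | hc | hc
      · simp only [hub, hc, if_pos] at hmub
        rw [le_div_iff_of_neg (by linarith : p.1 - x.1 < 0)] at hmub
        linarith
      · have hp2 : p.2 ≤ x.2 := by
          by_contra hp2
          push_neg at hp2
          have := hR p hpK (le_of_eq hc) (le_of_lt hp2)
          rw [this] at hp2; exact lt_irrefl _ hp2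
        rw [hc]; simp; linarith
      · simp only [hlb, hc, if_pos] at hlbm
        rw [div_le_iff₀ (by linarith : (0:ℝ) < p.1 - x.1)] at hlbm
        linarith
    refine ⟨m, x.2 - m * x.1, hm_pos, by ring, ?_, ?_, ?_⟩
    · have := hconstraint u (by simp); linarith
    · have := hconstraint v (by simp); linarith
    · have := hconstraint w (by simp); linarith
  · rintro ⟨a, haK, ha1, ha2, hane⟩ ⟨m, c, hm, hx, hu, hv, hw⟩
    -- K is contained in the halfspace below the line
    have hhalf : K ⊆ {p : ℝ × ℝ | p.2 - m * p.1 ≤ c} := by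
      apply convexHull_min
      · rintro p (h | h | h) <;> subst h <;> simp <;> linarith
      · have : IsLinearMap ℝ (fun p : ℝ × ℝ => p.2 - m * p.1) := by
          constructor
          · intro a b; simp; ring
          · intro r a; simp; ring
        exact convex_halfSpace_le this c
    have haline : a.2 - m * a.1 ≤ c := hhalf haK
    have ha1' : a.1 = x.1 := by nlinarith
    have ha2' : a.2 = x.2 := by nlinarith
    exact hane (Prod.ext ha1' ha2')
end

section
/- Let x and w be two distinct points of ℝ² with w ≤ x componentwise (equivalently, the componentwise least upper bound of w and x equals x). Then for every line L_{m,c} with positive slope that separates x and w (one of the two points lies strictly above L_{m,c} and the other strictly below), one has p_{m,c}(w) ≤ p_{m,c}(x) componentwise. -/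
/-- The push of a point `a` onto the line `L_{m,c} = {(t, m*t+c)}`. -/
noncomputable def push (m c : ℝ) (a : ℝ × ℝ) : ℝ × ℝ :=
  (max a.1 ((a.2 - c) / m), max a.2 (m * a.1 + c))

theorem push_le_of_le_and_separated (x w : ℝ × ℝ) (hne : x ≠ w) (hle : w ≤ x) :
    ∀ m c : ℝ, m > 0 →
      ((x.2 > m * x.1 + c ∧ w.2 < m * w.1 + c) ∨
       (x.2 < m * x.1 + c ∧ w.2 > m * w.1 + c)) →
      push m c w ≤ push m c x := by
  intro m c hm _
  obtain ⟨h1, h2⟩ := hle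
  constructor
  · exact max_le_max h1 (by gcongr <;> linarith)
  · exact max_le_max h2 (by nlinarith)
end

section
/- Let x and w be two distinct points of ℝ² that are incomparable in the componentwise order, so that their componentwise least upper bound lub(w,x) = (max(w₁,x₁), max(w₂,x₂)) is neither x nor w. Then for every line L_{m,c} with positive slope that separates w and lub(w,x) (one lies strictly above L_{m,c} and the other strictly below), one has p_{m,c}(w) ≤ p_{m,c}(x) componentwise. -/
theorem push_le_of_incomparable_sep_w_lub (x w : ℝ × ℝ) (hne : x ≠ w)
    (hxw : ¬ x ≤ w) (hwx : ¬ w ≤ x) :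
    ∀ m c : ℝ, m > 0 →
      ((w.2 > m * w.1 + c ∧ max w.2 x.2 < m * max w.1 x.1 + c) ∨
       (w.2 < m * w.1 + c ∧ max w.2 x.2 > m * max w.1 x.1 + c)) →
      push m c w ≤ push m c x := by
  clear hne hxw hwx
  intro m c hm h
  rcases h with ⟨h1, h2⟩ | ⟨h1, h2⟩
  · -- w strictly above, lub strictly below
    have hx1 : w.1 ≤ x.1 := by
      by_contra hc
      push_neg at hc
      have hmax : max w.1 x.1 = w.1 := max_eq_left hc.le
      rw [hmax] at h2
      have := le_max_left w.2 x.2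
      linarith
    have hmx : max w.1 x.1 = x.1 := max_eq_right hx1
    have hw2 : w.2 < m * x.1 + c := by
      have := le_max_left w.2 x.2
      rw [hmx] at h2; linarith
    refine ⟨?_, ?_⟩ <;> simp only [push]
    · refine max_le (le_trans hx1 (le_max_left _ _)) (le_trans ?_ (le_max_left x.1 _))
      rw [div_le_iff₀ hm]; linarith
    · refine max_le (le_trans hw2.le (le_max_right x.2 _)) (le_trans ?_ (le_max_right x.2 _))
      nlinarith
  · -- w strictly below, lub strictly above
    have hx2 : m * w.1 + c < x.2 := by
      rcases le_total w.2 x.2 with hle | hle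
      · rw [max_eq_right hle] at h2
        have := le_max_left w.1 x.1
        nlinarith
      · rw [max_eq_left hle] at h2
        have := le_max_left w.1 x.1
        nlinarith
    have hw2x2 : w.2 ≤ x.2 := by linarith
    refine ⟨?_, ?_⟩ <;> simp only [push]
    · refine max_le (le_trans ?_ (le_max_right x.1 _)) (le_trans ?_ (le_max_right x.1 _))
      · rw [le_div_iff₀ hm]; linarith
      · gcongr
    · exact max_le (le_trans hw2x2 (le_max_left _ _)) (le_trans (by linarith) (le_max_left x.2 _))
end

section
/- Let x and w be two distinct points of ℝ² that are incomparable in the componentwise order, so that their componentwise least upper bound lub(w,x) = (max(w₁,x₁), max(w₂,x₂)) is neither x nor w. Then for every line L_{m,c} with positive slope that separates x and lub(w,x) (one lies strictly above L_{m,c} and the other strictly below), one has p_{m,c}(x) ≤ p_{m,c}(w) componentwise. -/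
theorem push_le_of_incomparable_sep_x_lub (x w : ℝ × ℝ) (hne : x ≠ w)
    (hxw : ¬ x ≤ w) (hwx : ¬ w ≤ x) :
    ∀ m c : ℝ, m > 0 →
      ((x.2 > m * x.1 + c ∧ max w.2 x.2 < m * max w.1 x.1 + c) ∨
       (x.2 < m * x.1 + c ∧ max w.2 x.2 > m * max w.1 x.1 + c)) →
      push m c x ≤ push m c w := by
  intro m c hm hsep
  clear hne hwx
  rcases hsep with ⟨h1, h2⟩ | ⟨h1, h2⟩
  · -- x above the line, lub below
    have hx2 : x.2 < m * max w.1 x.1 + c := lt_of_le_of_lt (le_max_right _ _) h2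
    have hx1w1 : x.1 < w.1 := by
      by_contra h
      clear hxw
      push_neg at h
      rw [max_eq_right h] at hx2
      linarith
    have hw2x2 : w.2 < x.2 := by
      by_contra h
      push_neg at h
      exact hxw ⟨le_of_lt hx1w1, h⟩
    clear hxw
    have hmax1 : max w.1 x.1 = w.1 := max_eq_left (le_of_lt hx1w1)
    rw [hmax1] at hx2
    refine ⟨?_, ?_⟩ <;> simp only [push]
    · refine max_le (le_max_of_le_left (le_of_lt hx1w1)) (le_max_of_le_left ?_)
      rw [div_le_iff₀ hm]
      nlinarith
    · refine max_le (le_max_of_le_right (le_of_lt hx2)) (le_max_of_le_right ?_)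
      nlinarith
  · -- x below the line, lub above
    have hx2 : m * x.1 + c < max w.2 x.2 := by
      clear hxw
      have : m * x.1 + c ≤ m * max w.1 x.1 + c := by
        nlinarith [le_max_right w.1 x.1]
      linarith
    have hx2w2 : x.2 < w.2 := by
      by_contra h
      clear hxw
      push_neg at h
      rw [max_eq_right h] at hx2
      linarith
    have hw1x1 : w.1 < x.1 := by
      by_contra h
      push_neg at h
      exact hxw ⟨h, le_of_lt hx2w2⟩
    clear hxw
    have hmax2 : max w.2 x.2 = w.2 := max_eq_left (le_of_lt hx2w2)
    rw [hmax2] at h2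
    refine ⟨?_, ?_⟩ <;> simp only [push]
    · refine max_le (le_max_of_le_right ?_) (le_max_of_le_right ?_)
      · rw [le_div_iff₀ hm]; nlinarith
      · gcongr
    · refine max_le (le_max_of_le_left (le_of_lt hx2w2)) (le_max_of_le_left ?_)
      linarith
end

section
/- Let u, v, w, x be four points of ℝ². There exists no pair (m, c) with m > 0 such that u and v lie strictly above the line L_{m,c} while x and w lie strictly below L_{m,c}, if and only if there exist a point a = (a₁, a₂) on the segment from u to v and a point b = (b₁, b₂) on the segment from x to w such that b₁ ≤ a₁ and b₂ ≥ a₂. -/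
/-!
A point `a` of `[u, v]` and a point `b` of `[x, w]` with `b.1 ≤ a.1`, `b.2 ≥ a.2` amount to a point
of the compact convex set `D = [u, v] - [x, w]` in the closed quadrant `Q = [0, ∞) × (-∞, 0]`,
while a line of slope `m > 0` separates the two pairs exactly when `m * d.1 < d.2` on `D`.
If `D` misses `Q`, Hahn–Banach gives a functional `q * d.1 - p * d.2` that is negative on `D`
and nonnegative on the cone `Q`, so `p, q ≥ 0`; as `D` is compact, the negativity survives a small
increase of `p` and `q`, and `m = q / p` is then a positive slope.
-/

open Set Pointwise

lemma isCompact_segment_sub_segment (u v x w : ℝ × ℝ) :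
    IsCompact (segment ℝ u v - segment ℝ x w) := by
  have hseg : ∀ p q : ℝ × ℝ, IsCompact (segment ℝ p q) := fun p q => by
    rw [← convexHull_pair]; exact (toFinite _).isCompact_convexHull ℝ
  rw [sub_eq_add_neg]
  exact (hseg u v).add (hseg x w).neg

lemma nonneg_of_forall_lt_mul {𝕜 : Type*} [Field 𝕜] [LinearOrder 𝕜] [IsStrictOrderedRing 𝕜]
    {a v : 𝕜} (h : ∀ r : 𝕜, 0 < r → v < r * a) : 0 ≤ a := by
  by_contra! ha
  have hr := h ((|v| + 1) / -a) (div_pos (by positivity) (neg_pos.mpr ha))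
  rw [div_mul_eq_mul_div, div_neg, mul_div_cancel_right₀ _ ha.ne] at hr
  linarith [neg_abs_le v]

lemma ContinuousLinearMap.apply_eq_fst_mul_add_snd_mul (f : ℝ × ℝ →L[ℝ] ℝ) (d : ℝ × ℝ) :
    f d = d.1 * f (1, 0) + d.2 * f (0, 1) := by
  conv_lhs => rw [show d = d.1 • ((1 : ℝ), (0 : ℝ)) + d.2 • ((0 : ℝ), (1 : ℝ)) by ext <;> simp]
  simp only [map_add, map_smul, smul_eq_mul]

theorem exists_pos_mul_fst_lt_snd_of_disjoint {D : Set (ℝ × ℝ)} (hcpt : IsCompact D)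
    (hconv : Convex ℝ D) (hdisj : Disjoint D (Ici 0 ×ˢ Iic 0)) :
    ∃ m > 0, ∀ d ∈ D, m * d.1 < d.2 := by
  obtain ⟨f, s, t, hfs, hst, hft⟩ := geometric_hahn_banach_compact_closed hconv hcpt
    ((convex_Ici 0).prod (convex_Iic 0)) (isClosed_Ici.prod isClosed_Iic) hdisj
  have hs : s < 0 := hst.trans (by simpa using hft 0 (by simp))
  have hq : 0 ≤ f (1, 0) := nonneg_of_forall_lt_mul fun r hr => by
    have h := hft (r, 0) (by simpa using hr.le)
    rw [f.apply_eq_fst_mul_add_snd_mul] at h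
    simpa using h
  have hp : 0 ≤ -f (0, 1) := nonneg_of_forall_lt_mul fun r hr => by
    have h := hft (0, -r) (by simpa using hr.le)
    rw [f.apply_eq_fst_mul_add_snd_mul] at h
    simpa using h
  obtain ⟨C, hC⟩ := hcpt.exists_bound_of_continuousOn (f := fun d : ℝ × ℝ => d.1 - d.2)
    (by fun_prop)
  obtain ⟨ε, hε, hεC⟩ := exists_pos_mul_lt (neg_pos.mpr hs) C
  refine ⟨(f (1, 0) + ε) / (-f (0, 1) + ε), by positivity, fun d hd => ?_⟩
  have hfd := hfs d hd
  rw [f.apply_eq_fst_mul_add_snd_mul] at hfd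
  have hpert : ε * (d.1 - d.2) < -s := calc
    ε * (d.1 - d.2) ≤ ε * C := mul_le_mul_of_nonneg_left ((le_abs_self _).trans (hC d hd)) hε.le
    _ < -s := by linarith
  rw [div_mul_eq_mul_div, div_lt_iff₀ (by positivity)]
  linarith

theorem exists_separating_line_iff_segment_sub_segment (u v w x : ℝ × ℝ) :
    (∃ m c : ℝ, m > 0 ∧
        u.2 > m * u.1 + c ∧ v.2 > m * v.1 + c ∧
        x.2 < m * x.1 + c ∧ w.2 < m * w.1 + c) ↔
    ∃ m > 0, ∀ d ∈ segment ℝ u v - segment ℝ x w, m * d.1 < d.2 := by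
  constructor
  · rintro ⟨m, c, hm, hu, hv, hx, hw⟩
    have hlin : IsLinearMap ℝ fun p : ℝ × ℝ => p.2 - m * p.1 :=
      (LinearMap.snd ℝ ℝ ℝ - m • LinearMap.fst ℝ ℝ ℝ).isLinear
    refine ⟨m, hm, ?_⟩
    rintro _ ⟨a, ha, b, hb, rfl⟩
    have ha' := (convex_halfSpace_gt hlin c).segment_subset (x := u) (y := v)
      (by simp only [mem_ofPred_eq]; linarith) (by simp only [mem_ofPred_eq]; linarith) ha
    have hb' := (convex_halfSpace_lt hlin c).segment_subset (x := x) (y := w)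
      (by simp only [mem_ofPred_eq]; linarith) (by simp only [mem_ofPred_eq]; linarith) hb
    simp only [mem_ofPred_eq, Prod.fst_sub, Prod.snd_sub] at ha' hb' ⊢
    linarith
  · rintro ⟨m, hm, hD⟩
    have hvert : ∀ p ∈ segment ℝ u v, ∀ q ∈ segment ℝ x w, q.2 - m * q.1 < p.2 - m * p.1 := by
      intro p hp q hq
      have := hD (p - q) (sub_mem_sub hp hq)
      simp only [Prod.fst_sub, Prod.snd_sub] at this
      linarith
    have hu := left_mem_segment ℝ u v
    have hv := right_mem_segment ℝ u v
    have hx := left_mem_segment ℝ x w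
    have hw := right_mem_segment ℝ x w
    obtain ⟨c, hxw, huv⟩ := exists_between (max_lt
      (lt_min (hvert u hu x hx) (hvert v hv x hx)) (lt_min (hvert u hu w hw) (hvert v hv w hw)))
    refine ⟨m, c, hm, ?_, ?_, ?_, ?_⟩
    · linarith [min_le_left (u.2 - m * u.1) (v.2 - m * v.1)]
    · linarith [min_le_right (u.2 - m * u.1) (v.2 - m * v.1)]
    · linarith [le_max_left (x.2 - m * x.1) (w.2 - m * w.1)]
    · linarith [le_max_right (x.2 - m * x.1) (w.2 - m * w.1)]

theorem no_separating_line_2v2_iff (u v w x : ℝ × ℝ) :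
    (¬ ∃ m c : ℝ, m > 0 ∧
        u.2 > m * u.1 + c ∧ v.2 > m * v.1 + c ∧
        x.2 < m * x.1 + c ∧ w.2 < m * w.1 + c) ↔
    ∃ a ∈ segment ℝ u v, ∃ b ∈ segment ℝ x w, b.1 ≤ a.1 ∧ b.2 ≥ a.2 := by
  rw [exists_separating_line_iff_segment_sub_segment]
  constructor
  · intro hno
    by_contra! hsep
    refine hno (exists_pos_mul_fst_lt_snd_of_disjoint (isCompact_segment_sub_segment u v x w)
      ((convex_segment u v).sub (convex_segment x w)) ?_)
    rw [Set.disjoint_left]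
    rintro _ ⟨a, ha, b, hb, rfl⟩ ⟨h1, h2⟩
    simp only [mem_Ici, mem_Iic, Prod.fst_sub, Prod.snd_sub] at h1 h2
    linarith [hsep a ha b hb (by linarith)]
  · rintro ⟨a, ha, b, hb, h1, h2⟩ ⟨m, hm, hD⟩
    have hab := hD (a - b) (sub_mem_sub ha hb)
    simp only [Prod.fst_sub, Prod.snd_sub] at hab
    nlinarith
end

section
/- Let u, v, w, x be four points of ℝ². Define Q = {p ∈ ℝ² : there exists a on the segment from u to v with p₁ ≤ a₁ and p₂ ≥ a₂} and R = {p ∈ ℝ² : there exists b on the segment from x to w with p₁ ≥ b₁ and p₂ ≤ b₂}. Then there exist a point a on the segment from u to v and a point b on the segment from x to w with b₁ ≤ a₁ and b₂ ≥ a₂, if and only if x ∈ Q or w ∈ Q or u ∈ R or v ∈ R. -/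
open Set AffineMap

/-!
The admissible parameters `(t, s) ∈ [0, 1]²`, those for which `b(s) - a(t)` lies in the quadrant
`{p | p.1 ≤ 0 ∧ 0 ≤ p.2}`, are cut out by two affine inequalities. Some nonzero direction in the
parameter plane moves `b(s) - a(t)` only along `(-1, 1)` or not at all, so it preserves
admissibility; following it from an admissible point until it leaves the square gives an admissible
point on the boundary of the square, where `a` or `b` is an endpoint of its segment.
-/

theorem LinearMap.exists_ne_zero_apply_eq_zero_or_eq {K V : Type*} [Field K] [AddCommGroup V]
    [Module K V] [FiniteDimensional K V] (f : V →ₗ[K] V) {c : V} (hc : c ≠ 0) :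
    ∃ d ≠ 0, f d = 0 ∨ f d = c := by
  by_cases hf : Function.Injective f
  · obtain ⟨d, rfl⟩ := injective_iff_surjective.mp hf c
    exact ⟨d, by rintro rfl; exact hc (map_zero f), Or.inr rfl⟩
  · obtain ⟨d, hfd, hd⟩ : ∃ d, f d = 0 ∧ d ≠ 0 := by
      simpa [injective_iff_map_eq_zero] using hf
    exact ⟨d, hd, Or.inl hfd⟩

theorem exists_add_smul_mem_frontier {E : Type*} [NormedAddCommGroup E] [NormedSpace ℝ E]
    {K : Set E} (hK : Bornology.IsBounded K) {z : E} (hz : z ∈ K) {d : E} (hd : d ≠ 0) :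
    ∃ l : ℝ, 0 ≤ l ∧ z + l • d ∈ frontier K := by
  -- A ray avoiding the frontier stays in the interior by connectedness, but `K` is bounded.
  by_contra! h
  have hray : (fun l : ℝ => z + l • d) '' Ici 0 ⊆ interior K := by
    refine (isPreconnected_Ici.image _ (by fun_prop)).subset_of_closure_inter_subset
      isOpen_interior ⟨z, ⟨0, self_mem_Ici, by simp⟩, ?_⟩ ?_
    · rw [← self_sdiff_frontier]
      exact ⟨hz, by simpa using h 0 le_rfl⟩
    · rintro _ ⟨hcl, l, hl, rfl⟩
      have := closure_mono interior_subset hcl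
      rw [closure_eq_interior_union_frontier] at this
      exact this.resolve_right (h l hl)
  obtain ⟨r, hr⟩ := hK.subset_closedBall 0
  set l := (|r| + ‖z‖ + 1) / ‖d‖
  have hl : ‖l • d‖ = |r| + ‖z‖ + 1 := by
    rw [norm_smul, Real.norm_of_nonneg (by positivity), div_mul_cancel₀ _ (norm_ne_zero_iff.mpr hd)]
  have hfar : z + l • d ∈ Metric.closedBall 0 r :=
    hr (interior_subset (hray ⟨l, div_nonneg (by positivity) (norm_nonneg d), rfl⟩))
  rw [mem_closedBall_zero_iff] at hfar
  have := norm_sub_le (z + l • d) z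
  rw [add_sub_cancel_left] at this
  linarith [le_abs_self r]

theorem AffineMap.exists_mem_frontier_of_recession {E : Type*} [NormedAddCommGroup E]
    [NormedSpace ℝ E] [FiniteDimensional ℝ E] (Φ : E →ᵃ[ℝ] E) {K C : Set E} {c : E}
    (hc : c ≠ 0) (hC : ∀ p ∈ C, ∀ r : ℝ, 0 ≤ r → p + r • c ∈ C) (hK : Bornology.IsBounded K)
    {z : E} (hz : z ∈ K) (hΦz : Φ z ∈ C) : ∃ z' ∈ frontier K, Φ z' ∈ C := by
  obtain ⟨d, hd, hΦd⟩ := Φ.linear.exists_ne_zero_apply_eq_zero_or_eq hc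
  obtain ⟨l, hl, hfr⟩ := exists_add_smul_mem_frontier hK hz hd
  refine ⟨_, hfr, ?_⟩
  have hmove : Φ (z + l • d) = Φ z + l • Φ.linear d := by
    rw [add_comm z, ← vadd_eq_add, Φ.map_vadd, vadd_eq_add, add_comm, map_smul]
  rcases hΦd with h | h <;> rw [hmove, h]
  · simpa using hΦz
  · exact hC _ hΦz l hl

theorem segment_points_iff_vertex_in_region (u v w x : ℝ × ℝ) :
    let Q : Set (ℝ × ℝ) := {p | ∃ a ∈ segment ℝ u v, p.1 ≤ a.1 ∧ p.2 ≥ a.2}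
    let R : Set (ℝ × ℝ) := {p | ∃ b ∈ segment ℝ x w, p.1 ≥ b.1 ∧ p.2 ≤ b.2}
    (∃ a ∈ segment ℝ u v, ∃ b ∈ segment ℝ x w, b.1 ≤ a.1 ∧ b.2 ≥ a.2) ↔
      x ∈ Q ∨ w ∈ Q ∨ u ∈ R ∨ v ∈ R := by
  intro Q R
  constructor
  · rintro ⟨a, ha, b, hb, h1, h2⟩
    rw [segment_eq_image_lineMap] at ha hb
    obtain ⟨t, ht, rfl⟩ := ha
    obtain ⟨s, hs, rfl⟩ := hb
    let Φ : ℝ × ℝ →ᵃ[ℝ] ℝ × ℝ := (lineMap x w).comp (LinearMap.snd ℝ ℝ ℝ).toAffineMap -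
      (lineMap u v).comp (LinearMap.fst ℝ ℝ ℝ).toAffineMap
    have hΦ (z : ℝ × ℝ) : Φ z = lineMap x w z.2 - lineMap u v z.1 := rfl
    obtain ⟨⟨t', s'⟩, hz, hΦz⟩ := Φ.exists_mem_frontier_of_recession (c := (-1, 1))
      (C := {p | p.1 ≤ 0 ∧ 0 ≤ p.2}) (by simp)
      (fun p hp r hr => ⟨by simp; linarith [hp.1], by simp; linarith [hp.2]⟩)
      (Metric.isBounded_Icc 0 1 |>.prod (Metric.isBounded_Icc 0 1)) (z := (t, s)) ⟨ht, hs⟩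
      (by simp only [hΦ, mem_ofPred_eq, Prod.fst_sub, Prod.snd_sub]; constructor <;> linarith)
    rw [frontier_prod_eq, closure_Icc, frontier_Icc zero_le_one] at hz
    simp only [hΦ, mem_ofPred_eq, Prod.fst_sub, Prod.snd_sub, sub_nonpos, sub_nonneg] at hΦz
    rcases hz with ⟨ht', rfl | rfl⟩ | ⟨rfl | rfl, hs'⟩
    · exact Or.inl ⟨_, lineMap_mem_segment ℝ u v ht', by simpa using hΦz⟩
    · exact Or.inr (Or.inl ⟨_, lineMap_mem_segment ℝ u v ht', by simpa using hΦz⟩)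
    · exact Or.inr (Or.inr (Or.inl ⟨_, lineMap_mem_segment ℝ x w hs', by simpa using hΦz⟩))
    · exact Or.inr (Or.inr (Or.inr ⟨_, lineMap_mem_segment ℝ x w hs', by simpa using hΦz⟩))
  · rintro (⟨a, ha, h1, h2⟩ | ⟨a, ha, h1, h2⟩ | ⟨b, hb, h1, h2⟩ | ⟨b, hb, h1, h2⟩)
    · exact ⟨a, ha, x, left_mem_segment ℝ x w, h1, h2⟩
    · exact ⟨a, ha, w, right_mem_segment ℝ x w, h1, h2⟩
    · exact ⟨u, left_mem_segment ℝ u v, b, hb, h1, h2⟩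
    · exact ⟨v, right_mem_segment ℝ u v, b, hb, h1, h2⟩
end

section
/- Let u, v, w, x and ω = (ω₁, ω₂) be points of ℝ² with {u, w} ∩ {v, x} = ∅. Define the quadrants Q₁ = {p : p₁ > ω₁ and p₂ > ω₂}, Q₂ = {p : p₁ ≤ ω₁ and p₂ ≥ ω₂}, Q₃ = {p : p₁ < ω₁ and p₂ < ω₂}, Q₄ = {p : p₁ ≥ ω₁ and p₂ ≤ ω₂}. Suppose x ∉ Q₂, v ∉ Q₂, u ∉ Q₄, w ∉ Q₄, and at least one of u, v, w, x lies in Q₁ ∪ Q₃. For each c ∈ {u, v, w, x} ∩ (Q₁ ∪ Q₃), let m_c = (c₂ − ω₂)/(c₁ − ω₁) (well defined, since c₁ ≠ ω₁ for such c), let sign₁(c) = +1 if c ∈ Q₁ and −1 if c ∈ Q₃, and let sign₂(c) = +1 if c ∈ {v, x} and −1 if c ∈ {u, w}. Then there exists m > 0 such that u and w lie strictly above the line through ω with slope m (that is, L_{m, ω₂ − m·ω₁}) while v and x lie strictly below it, if and only if there exists m > 0 such that sign₁(c)·sign₂(c)·m_c < sign₁(c)·sign₂(c)·m for every c ∈ {u,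 v, w, x} ∩ (Q₁ ∪ Q₃). -/
private lemma aux_above (m a b : ℝ) (hm : 0 < m) (h4 : ¬(0 ≤ a ∧ b ≤ 0)) :
    m * a < b ↔ (((0 < a ∧ 0 < b) → m < b / a) ∧ ((a < 0 ∧ b < 0) → b / a < m)) := by
  constructor
  · intro h
    refine ⟨fun hc => ?_, fun hc => ?_⟩
    · rw [lt_div_iff₀ hc.1]; linarith
    · rw [div_lt_iff_of_neg hc.1]; linarith
  · rintro ⟨h1, h3⟩
    rcases lt_trichotomy a 0 with ha | ha | ha
    · rcases lt_or_ge b 0 with hb | hb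
      · have := h3 ⟨ha, hb⟩; rw [div_lt_iff_of_neg ha] at this; linarith
      · nlinarith
    · subst ha
      have hb : 0 < b := by
        by_contra hb; exact h4 ⟨le_refl 0, by linarith⟩
      simpa using hb
    · rcases lt_or_ge 0 b with hb | hb
      · have := h1 ⟨ha, hb⟩; rw [lt_div_iff₀ ha] at this; linarith
      · exact absurd ⟨le_of_lt ha, hb⟩ h4

private lemma aux_below (m a b : ℝ) (hm : 0 < m) (h2 : ¬(a ≤ 0 ∧ 0 ≤ b)) :
    b < m * a ↔ (((0 < a ∧ 0 < b) → b / a < m) ∧ ((a < 0 ∧ b < 0) → m < b / a)) := by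
  have := aux_above m (-a) (-b) hm (by push_neg at h2 ⊢; intro h; linarith [h2 (by linarith)])
  rw [neg_div_neg_eq] at this
  constructor
  · intro h
    obtain ⟨h1, h3⟩ := this.1 (by linarith)
    exact ⟨fun hc => h3 ⟨by linarith, by linarith⟩, fun hc => h1 ⟨by linarith, by linarith⟩⟩
  · rintro ⟨h1, h3⟩
    have := this.2 ⟨fun hc => h3 ⟨by linarith, by linarith⟩, fun hc => h1 ⟨by linarith, by linarith⟩⟩
    linarith

open scoped Classical in
theorem separating_line_through_omega_iff_slope_condition (u v w x ω : ℝ × ℝ)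
    (hdisj : ({u, w} : Set (ℝ × ℝ)) ∩ {v, x} = ∅) :
    let Q₁ : Set (ℝ × ℝ) := {p | p.1 > ω.1 ∧ p.2 > ω.2}
    let Q₂ : Set (ℝ × ℝ) := {p | p.1 ≤ ω.1 ∧ p.2 ≥ ω.2}
    let Q₃ : Set (ℝ × ℝ) := {p | p.1 < ω.1 ∧ p.2 < ω.2}
    let Q₄ : Set (ℝ × ℝ) := {p | p.1 ≥ ω.1 ∧ p.2 ≤ ω.2}
    let slope : ℝ × ℝ → ℝ := fun c => (c.2 - ω.2) / (c.1 - ω.1)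
    let sign₁ : ℝ × ℝ → ℝ := fun c => if c ∈ Q₁ then 1 else -1
    let sign₂ : ℝ × ℝ → ℝ := fun c => if c ∈ ({v, x} : Set (ℝ × ℝ)) then 1 else -1
    x ∉ Q₂ → v ∉ Q₂ → u ∉ Q₄ → w ∉ Q₄ →
    (u ∈ Q₁ ∪ Q₃ ∨ v ∈ Q₁ ∪ Q₃ ∨ w ∈ Q₁ ∪ Q₃ ∨ x ∈ Q₁ ∪ Q₃) →
    ((∃ m : ℝ, m > 0 ∧
        u.2 > m * u.1 + (ω.2 - m * ω.1) ∧ w.2 > m * w.1 + (ω.2 - m * ω.1) ∧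
        v.2 < m * v.1 + (ω.2 - m * ω.1) ∧ x.2 < m * x.1 + (ω.2 - m * ω.1)) ↔
      ∃ m : ℝ, m > 0 ∧ ∀ c ∈ ({u, v, w, x} : Set (ℝ × ℝ)) ∩ (Q₁ ∪ Q₃),
        sign₁ c * sign₂ c * slope c < sign₁ c * sign₂ c * m) := by
  intro Q₁ Q₂ Q₃ Q₄ slope sign₁ sign₂ hx hv hu hw hone
  have huvx : u ∉ ({v, x} : Set (ℝ × ℝ)) := by
    intro h
    have : u ∈ ({u, w} : Set (ℝ × ℝ)) ∩ {v, x} := ⟨Set.mem_insert _ _, h⟩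
    rw [hdisj] at this; exact this
  have hwvx : w ∉ ({v, x} : Set (ℝ × ℝ)) := by
    intro h
    have : w ∈ ({u, w} : Set (ℝ × ℝ)) ∩ {v, x} := ⟨by simp, h⟩
    rw [hdisj] at this; exact this
  simp only [Q₂, Q₄, Set.mem_setOf_eq] at hx hv hu hw
  have key : ∀ m : ℝ, 0 < m →
      ((u.2 > m * u.1 + (ω.2 - m * ω.1) ∧ w.2 > m * w.1 + (ω.2 - m * ω.1) ∧
        v.2 < m * v.1 + (ω.2 - m * ω.1) ∧ x.2 < m * x.1 + (ω.2 - m * ω.1)) ↔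
       ∀ c ∈ ({u, v, w, x} : Set (ℝ × ℝ)) ∩ (Q₁ ∪ Q₃),
         sign₁ c * sign₂ c * slope c < sign₁ c * sign₂ c * m) := by
    intro m hm
    have Habove : ∀ c : ℝ × ℝ, c ∉ ({v, x} : Set (ℝ × ℝ)) → ¬(c.1 ≥ ω.1 ∧ c.2 ≤ ω.2) →
        ((c.2 > m * c.1 + (ω.2 - m * ω.1)) ↔
          (c ∈ Q₁ ∪ Q₃ → sign₁ c * sign₂ c * slope c < sign₁ c * sign₂ c * m)) := by
      intro c hcvx hc4
      have Hab : (c.2 > m * c.1 + (ω.2 - m * ω.1)) ↔ m * (c.1 - ω.1) < c.2 - ω.2 := by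
        constructor <;> intro h <;> nlinarith
      rw [Hab, aux_above m (c.1 - ω.1) (c.2 - ω.2) hm
        (by intro h; exact hc4 ⟨by linarith [h.1], by linarith [h.2]⟩)]
      have hs2 : sign₂ c = -1 := if_neg hcvx
      constructor
      · rintro ⟨h1, h3⟩ (hq | hq)
        · have hs1 : sign₁ c = 1 := if_pos hq
          have := h1 ⟨sub_pos.2 hq.1, sub_pos.2 hq.2⟩
          simp only [hs1, hs2, slope]; nlinarith
        · have hnq : c ∉ Q₁ := fun hq1 => absurd hq.1 (not_lt.2 (le_of_lt hq1.1))
          have hs1 : sign₁ c = -1 := if_neg hnq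
          have := h3 ⟨sub_neg.2 hq.1, sub_neg.2 hq.2⟩
          simp only [hs1, hs2, slope]; nlinarith
      · intro h
        constructor
        · rintro ⟨ha, hb⟩
          have hq : c ∈ Q₁ := ⟨by linarith, by linarith⟩
          have := h (Or.inl hq)
          have hs1 : sign₁ c = 1 := if_pos hq
          simp only [hs1, hs2, slope] at this; nlinarith
        · rintro ⟨ha, hb⟩
          have hq : c ∈ Q₃ := ⟨by linarith, by linarith⟩
          have hnq : c ∉ Q₁ := fun hq1 => absurd hq.1 (not_lt.2 (le_of_lt hq1.1))
          have := h (Or.inr hq)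
          have hs1 : sign₁ c = -1 := if_neg hnq
          simp only [hs1, hs2, slope] at this; nlinarith
    have Hbelow : ∀ c : ℝ × ℝ, c ∈ ({v, x} : Set (ℝ × ℝ)) → ¬(c.1 ≤ ω.1 ∧ c.2 ≥ ω.2) →
        ((c.2 < m * c.1 + (ω.2 - m * ω.1)) ↔
          (c ∈ Q₁ ∪ Q₃ → sign₁ c * sign₂ c * slope c < sign₁ c * sign₂ c * m)) := by
      intro c hcvx hc2
      have Hbl : (c.2 < m * c.1 + (ω.2 - m * ω.1)) ↔ c.2 - ω.2 < m * (c.1 - ω.1) := by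
        constructor <;> intro h <;> nlinarith
      rw [Hbl, aux_below m (c.1 - ω.1) (c.2 - ω.2) hm
        (by intro h; exact hc2 ⟨by linarith [h.1], by linarith [h.2]⟩)]
      have hs2 : sign₂ c = 1 := if_pos hcvx
      constructor
      · rintro ⟨h1, h3⟩ (hq | hq)
        · have hs1 : sign₁ c = 1 := if_pos hq
          have := h1 ⟨sub_pos.2 hq.1, sub_pos.2 hq.2⟩
          simp only [hs1, hs2, slope]; nlinarith
        · have hnq : c ∉ Q₁ := fun hq1 => absurd hq.1 (not_lt.2 (le_of_lt hq1.1))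
          have hs1 : sign₁ c = -1 := if_neg hnq
          have := h3 ⟨sub_neg.2 hq.1, sub_neg.2 hq.2⟩
          simp only [hs1, hs2, slope]; nlinarith
      · intro h
        constructor
        · rintro ⟨ha, hb⟩
          have hq : c ∈ Q₁ := ⟨by linarith, by linarith⟩
          have := h (Or.inl hq)
          have hs1 : sign₁ c = 1 := if_pos hq
          simp only [hs1, hs2, slope] at this; nlinarith
        · rintro ⟨ha, hb⟩
          have hq : c ∈ Q₃ := ⟨by linarith, by linarith⟩
          have hnq : c ∉ Q₁ := fun hq1 => absurd hq.1 (not_lt.2 (le_of_lt hq1.1))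
          have := h (Or.inr hq)
          have hs1 : sign₁ c = -1 := if_neg hnq
          simp only [hs1, hs2, slope] at this; nlinarith
    have Hu := Habove u huvx hu
    have Hw := Habove w hwvx hw
    have Hv := Hbelow v (by simp) hv
    have Hx := Hbelow x (by simp) hx
    constructor
    · rintro ⟨h1, h2, h3, h4⟩ c ⟨hcm, hcq⟩
      simp only [Set.mem_insert_iff, Set.mem_singleton_iff] at hcm
      rcases hcm with rfl | rfl | rfl | rfl
      exacts [Hu.1 h1 hcq, Hv.1 h3 hcq, Hw.1 h2 hcq, Hx.1 h4 hcq]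
    · intro h
      exact ⟨Hu.2 fun hq => h u ⟨by simp, hq⟩, Hw.2 fun hq => h w ⟨by simp, hq⟩,
        Hv.2 fun hq => h v ⟨by simp, hq⟩, Hx.2 fun hq => h x ⟨by simp, hq⟩⟩
  constructor
  · rintro ⟨m, hm, h⟩
    exact ⟨m, hm, (key m hm).1 h⟩
  · rintro ⟨m, hm, h⟩
    exact ⟨m, hm, (key m hm).2 h⟩
end
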